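/- Fix p : ℤ and assume Δ (p−2) : V (p−2) → V (p−2) is surjective. If φ ∈ range (d (p−1)) ∩ ker (Δ p) (φ is an exact harmonic p-element) and δ p φ ∈ range (d (p−2)) (its codifferential is exact), then there exists γ ∈ ker (Δ (p−1)) (a harmonic (p−1)-element) with φ = d (p−1) γ. (Injectivity step in the proof of Lemma 3.) -/
import Mathlib


/-- Transport along an equality of indices, as a linear map (the identity map). -/
def lcast (V : ℤ → Type*) [∀ p, AddCommGroup (V p)] [∀ p, Module ℝ (V p)]
    {p q : ℤ} (h : p = q) : V p →ₗ[ℝ] V q := by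
  subst h; exact LinearMap.id


section helpers
variable (V : ℤ → Type*) [∀ p, AddCommGroup (V p)] [∀ p, Module ℝ (V p)]

@[simp] lemma lcast_lcast {a b c : ℤ} (h : a = b) (h' : b = c) (x : V a) :
    lcast V h' (lcast V h x) = lcast V (h.trans h') x := by subst h h'; rfl

@[simp] lemma lcast_refl {a : ℤ} (h : a = a) (x : V a) : lcast V h x = x := rfl

lemma d_lcast (d : ∀ p : ℤ, V p →ₗ[ℝ] V (p + 1)) {a b : ℤ} (h : a = b) (x : V a) :
    d b (lcast V h x) = lcast V (by rw [h]) (d a x) := by subst h; rfl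

lemma delta_lcast (δ : ∀ p : ℤ, V p →ₗ[ℝ] V (p - 1)) {a b : ℤ} (h : a = b) (x : V a) :
    δ b (lcast V h x) = lcast V (by rw [h]) (δ a x) := by subst h; rfl

lemma lcast_eq_iff {a b : ℤ} (h : a = b) (x : V a) (y : V b) :
    lcast V h x = y ↔ x = lcast V h.symm y := by subst h; simp

end helpers

/-- The differential `d (p-1)`, regarded as a linear map into `V p`. -/
def dTo (V : ℤ → Type*) [∀ p, AddCommGroup (V p)] [∀ p, Module ℝ (V p)]
    (d : ∀ p : ℤ, V p →ₗ[ℝ] V (p + 1)) (p : ℤ) : V (p - 1) →ₗ[ℝ] V p :=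
  (lcast V (by omega)).comp (d (p - 1))

/-- The codifferential `δ (p+1)`, regarded as a linear map into `V p`. -/
def deltaTo (V : ℤ → Type*) [∀ p, AddCommGroup (V p)] [∀ p, Module ℝ (V p)]
    (δ : ∀ p : ℤ, V p →ₗ[ℝ] V (p - 1)) (p : ℤ) : V (p + 1) →ₗ[ℝ] V p :=
  (lcast V (by omega)).comp (δ (p + 1))

/-- The Laplacian `Δ p = d (p-1) ∘ δ p + δ (p+1) ∘ d p : V p →ₗ[ℝ] V p`. -/
def Lap (V : ℤ → Type*) [∀ p, AddCommGroup (V p)] [∀ p, Module ℝ (V p)]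
    (d : ∀ p : ℤ, V p →ₗ[ℝ] V (p + 1)) (δ : ∀ p : ℤ, V p →ₗ[ℝ] V (p - 1))
    (p : ℤ) : V p →ₗ[ℝ] V p :=
  ((dTo V d p).comp (δ p)) + ((deltaTo V δ p).comp (d p))

/-- **Injectivity step in the proof of Lemma 3.**  Suppose `Δ (p-2)` is surjective.
If `φ` is an exact harmonic `p`-element whose codifferential `δ p φ` is exact, then
`φ = d (p-1) γ` for some harmonic `(p-1)`-element `γ`. -/
theorem delta_injectivity_step
    (V : ℤ → Type*) [∀ p, AddCommGroup (V p)] [∀ p, Module ℝ (V p)]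
    (d : ∀ p : ℤ, V p →ₗ[ℝ] V (p + 1)) (δ : ∀ p : ℤ, V p →ₗ[ℝ] V (p - 1))
    (hd : ∀ p : ℤ, (d (p + 1)).comp (d p) = 0)
    (hδ : ∀ p : ℤ, (δ (p - 1)).comp (δ p) = 0)
    (p : ℤ)
    (hΔ : Function.Surjective (Lap V d δ (p - 2)))
    (φ : V p)
    (hφ : φ ∈ LinearMap.range (dTo V d p) ⊓ LinearMap.ker (Lap V d δ p))
    (hδφ : δ p φ ∈ LinearMap.range (dTo V d (p - 1))) :
    ∃ γ : V (p - 1), γ ∈ LinearMap.ker (Lap V d δ (p - 1)) ∧ φ = dTo V d p γ := by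
  obtain ⟨⟨β, hβ⟩, hharm⟩ := hφ
  obtain ⟨ξ, hξ⟩ := hδφ
  obtain ⟨α, hα⟩ := hΔ (lcast V (by omega : p - 1 - 1 = p - 2) (-(ξ + δ (p - 1) β)))
  have hdd : ∀ (q : ℤ) (x : V q), d (q + 1) (d q x) = 0 := fun q x => by
    have := congrFun (congrArg DFunLike.coe (hd q)) x; simpa using this
  refine ⟨β + lcast V (by omega : p - 2 + 1 = p - 1) (d (p - 2) α), ?_, ?_⟩
  · -- harmonic
    have hβ' : d (p - 1) β = lcast V (by omega : p = p - 1 + 1) φ := by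
      simp only [dTo, LinearMap.comp_apply, lcast_eq_iff] at hβ
      exact hβ
    have hξ' : d (p - 1 - 1) ξ = lcast V (by omega : p - 1 = p - 1 - 1 + 1) (δ p φ) := by
      simp only [dTo, LinearMap.comp_apply, lcast_eq_iff] at hξ
      exact hξ
    have hα' : δ (p - 2 + 1) (d (p - 2) α)
        = lcast V (by omega : p - 2 = p - 2 + 1 - 1) (lcast V (by omega) (-(ξ + δ (p - 1) β))
            - lcast V (by omega : p - 2 - 1 + 1 = p - 2) (d (p - 2 - 1) (δ (p - 2) α))) := by
      simp only [Lap, dTo, deltaTo, LinearMap.add_apply, LinearMap.comp_apply] at hα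
      rw [add_comm, ← eq_sub_iff_add_eq, lcast_eq_iff] at hα
      exact hα
    simp only [LinearMap.mem_ker, Lap, dTo, deltaTo, LinearMap.add_apply,
      LinearMap.comp_apply, map_add, d_lcast, delta_lcast, lcast_lcast, hdd, map_zero,
      hα', hβ', hξ', map_sub, map_neg, add_zero, sub_zero]
    abel
  · simp only [dTo, LinearMap.comp_apply, map_add, d_lcast, lcast_lcast, hdd, map_zero,
      add_zero, lcast_refl] at hβ ⊢
    exact hβ.symm
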